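/- arXiv:2502.16075 — 8 statements merged into one kernel-verified Lean document; each statement's English description precedes it below -/
import Mathlib

section
/- Let $p(x) = \sum_{i=0}^{M} a_i x^i$ be a polynomial with non-negative real coefficients and degree at most $M$ (with $M \geq 1$ an integer), and define $p_a(x) := \sum_{i=1}^{M-1} \frac{(i+1)a_{i+1}}{M-i} x^{i} + \frac{a_1}{M-1/2}$. Then for every $x \geq 0$, $x \cdot p_a'(x) + p'(x) \leq M \cdot p_a(x)$. -/
open Finset

/-- For a polynomial `p(x) = ∑_{i=0}^M a_i x^i` with non-negative coefficients
and `p_a(x) = ∑_{i=1}^{M-1} (i+1)a_{i+1}/(M-i) x^i + a_1/(M-1/2)`, we have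
`x * p_a'(x) + p'(x) ≤ M * p_a(x)` for all `x ≥ 0`. -/
theorem stmt0 (M : ℕ) (hM : 1 ≤ M) (a : ℕ → ℝ) (ha : ∀ i, 0 ≤ a i)
    (p' pa pa' : ℝ → ℝ)
    (hp' : ∀ x, p' x = ∑ i ∈ Icc 1 M, (i : ℝ) * a i * x ^ (i - 1))
    (hpa : ∀ x, pa x =
      (∑ i ∈ Icc 1 (M - 1), ((i : ℝ) + 1) * a (i + 1) / ((M : ℝ) - i) * x ^ i)
        + a 1 / ((M : ℝ) - 1 / 2))
    (hpa' : ∀ x, pa' x =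
      ∑ i ∈ Icc 1 (M - 1), (i : ℝ) * ((i : ℝ) + 1) * a (i + 1) / ((M : ℝ) - i) * x ^ (i - 1)) :
    ∀ x : ℝ, 0 ≤ x → x * pa' x + p' x ≤ (M : ℝ) * pa x := by
  intro x hx
  have hMpos : ∀ i ∈ Icc 1 (M - 1), (1 : ℝ) ≤ (M : ℝ) - i := by
    intro i hi
    simp only [mem_Icc] at hi
    have h : i + 1 ≤ M := by omega
    have h' : (i : ℝ) + 1 ≤ M := by exact_mod_cast h
    linarith
  -- x * pa' x
  have key1 : x * pa' x =
      ∑ i ∈ Icc 1 (M - 1), (i : ℝ) * ((i : ℝ) + 1) * a (i + 1) / ((M : ℝ) - i) * x ^ i := by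
    rw [hpa', Finset.mul_sum]
    apply Finset.sum_congr rfl
    intro i hi
    simp only [mem_Icc] at hi
    have h1 : i - 1 + 1 = i := by omega
    rw [mul_comm x, mul_assoc, ← pow_succ, h1]
  -- p' x
  have key2 : p' x = a 1 + ∑ i ∈ Icc 1 (M - 1), ((i : ℝ) + 1) * a (i + 1) * x ^ i := by
    rw [hp']
    have hins : Icc 1 M = insert 1 (Icc 2 M) := by
      ext j; simp only [mem_Icc, mem_insert]; omega
    rw [hins, Finset.sum_insert (by simp)]
    congr 1
    · norm_num
    have hmap : (Icc 1 (M - 1)).map (addRightEmbedding 1) = Icc 2 M := by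
      rw [Finset.map_add_right_Icc]
      congr 1
      omega
    rw [← hmap, Finset.sum_map]
    apply Finset.sum_congr rfl
    intro i hi
    simp only [addRightEmbedding_apply]
    push_cast
    ring_nf
  -- M * pa x
  have key3 : (M : ℝ) * pa x =
      (∑ i ∈ Icc 1 (M - 1), (M : ℝ) * (((i : ℝ) + 1) * a (i + 1) / ((M : ℝ) - i)) * x ^ i)
        + (M : ℝ) * (a 1 / ((M : ℝ) - 1 / 2)) := by
    rw [hpa, mul_add, Finset.mul_sum]
    congr 1
    apply Finset.sum_congr rfl
    intro i hi
    ring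
  rw [key1, key2, key3, ← add_assoc, add_comm _ (a 1), add_assoc, ← Finset.sum_add_distrib]
  have hsum : ∀ i ∈ Icc 1 (M - 1),
      (i : ℝ) * ((i : ℝ) + 1) * a (i + 1) / ((M : ℝ) - i) * x ^ i
        + ((i : ℝ) + 1) * a (i + 1) * x ^ i
      = (M : ℝ) * (((i : ℝ) + 1) * a (i + 1) / ((M : ℝ) - i)) * x ^ i := by
    intro i hi
    have h := hMpos i hi
    have hne : (M : ℝ) - i ≠ 0 := by linarith
    field_simp
    ring
  rw [Finset.sum_congr rfl hsum, add_comm (a 1)]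
  gcongr _ + ?_
  -- a 1 ≤ M * (a 1 / (M - 1/2))
  have hM2 : (1 : ℝ) ≤ (M : ℝ) := by exact_mod_cast hM
  have hpos : (0 : ℝ) < (M : ℝ) - 1 / 2 := by linarith
  rw [mul_div_assoc', le_div_iff₀ hpos]
  nlinarith [ha 1]
end

section
/- Let $f : \mathbb{R}^D \to \mathbb{R}$ be locally Lipschitz and differentiable almost everywhere, and suppose there exist constants such that $|\langle \nabla f(\theta), \theta \rangle - M f(\theta)| \leq a \|\theta\|^{M-1}$ for all $\theta$ where $\nabla f$ exists (with $M \geq 1$, $a \geq 0$). Then for any $r > 0$, setting $c_1 = \max_{\|\theta\| = r} |f(\theta)|/r^M$, we have $|f(\theta)| \leq (a/r + c_1)\|\theta\|^M$ for all $\theta$ with $\|\theta\| \geq r$. -/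
/-- If `f` is `C¹` and near-`M`-homogeneous in the sense that
`|⟨∇f(θ), θ⟩ - M f(θ)| ≤ a ‖θ‖^{M-1}`, then for any `r > 0` and
`c₁ = max_{‖θ‖=r} |f(θ)|/r^M`, we have `|f(θ)| ≤ (a/r + c₁) ‖θ‖^M` whenever `‖θ‖ ≥ r`. -/
theorem stmt5 (D M : ℕ) (hM : 1 ≤ M) (a : ℝ) (ha : 0 ≤ a)
    (f : EuclideanSpace ℝ (Fin D) → ℝ) (hf : ContDiff ℝ 1 f)
    (hhom : ∀ θ, |fderiv ℝ f θ θ - (M : ℝ) * f θ| ≤ a * ‖θ‖ ^ (M - 1))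
    (r : ℝ) (hr : 0 < r) (c1 : ℝ)
    (hc1 : IsGreatest ((fun θ => |f θ| / r ^ M) '' {θ : EuclideanSpace ℝ (Fin D) | ‖θ‖ = r}) c1) :
    ∀ θ, r ≤ ‖θ‖ → |f θ| ≤ (a / r + c1) * ‖θ‖ ^ M := by
  obtain ⟨k, rfl⟩ : ∃ k, M = k + 1 := ⟨M - 1, (Nat.succ_pred_eq_of_pos hM).symm⟩
  simp only [Nat.add_sub_cancel] at hhom
  intro θ hθ
  set s := ‖θ‖ with hs
  have hs0 : 0 < s := lt_of_lt_of_le hr hθ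
  set u : EuclideanSpace ℝ (Fin D) := s⁻¹ • θ with hu
  have hu1 : ‖u‖ = 1 := by
    rw [hu, norm_smul, norm_inv, Real.norm_eq_abs, abs_of_pos hs0, ← hs,
      inv_mul_cancel₀ hs0.ne']
  have hθu : θ = s • u := by rw [hu, smul_smul, mul_inv_cancel₀ hs0.ne', one_smul]
  set h : ℝ → ℝ := fun t => f (t • u) with hh
  have hderiv : ∀ t : ℝ, HasDerivAt h (fderiv ℝ f (t • u) u) t := by
    intro t
    have h1 : HasDerivAt (fun t : ℝ => t • u) u t := by
      simpa using (hasDerivAt_id t).smul_const u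
    exact ((hf.differentiable one_ne_zero (t • u)).hasFDerivAt).comp_hasDerivAt t h1
  set φ : ℝ → ℝ := fun t => h t / t ^ (k + 1) with hφ
  set φ' : ℝ → ℝ := fun t =>
    (fderiv ℝ f (t • u) u * t ^ (k + 1) - h t * ((↑(k + 1) : ℝ) * t ^ k)) / (t ^ (k + 1)) ^ 2
    with hφ'
  have hφderiv : ∀ t : ℝ, t ≠ 0 → HasDerivAt φ (φ' t) t := fun t ht =>
    (hderiv t).div (hasDerivAt_pow (k + 1) t) (pow_ne_zero _ ht)
  set B : ℝ → ℝ := fun t => c1 + a / r - a * t⁻¹ with hB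
  have hBderiv : ∀ t : ℝ, t ≠ 0 → HasDerivAt B (a / t ^ 2) t := by
    intro t ht
    have := ((hasDerivAt_inv ht).const_mul a).const_sub (c1 + a / r)
    exact this.congr_deriv (by ring)
  -- hypotheses of the fencing lemma
  have Hf : ContinuousOn φ (Set.Icc r s) := by
    apply ContinuousOn.div
    · exact (hf.continuous.comp (continuous_id.smul continuous_const)).continuousOn
    · exact (continuous_pow _).continuousOn
    · intro t ht
      exact pow_ne_zero _ (lt_of_lt_of_le hr ht.1).ne'
  have Hf' : ∀ x ∈ Set.Ico r s, HasDerivWithinAt φ (φ' x) (Set.Ici x) x := fun x hx =>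
    (hφderiv x (lt_of_lt_of_le hr hx.1).ne').hasDerivWithinAt
  have Ha : ‖φ r‖ ≤ B r := by
    have hru : ‖r • u‖ = r := by
      rw [norm_smul, Real.norm_eq_abs, abs_of_pos hr, hu1, mul_one]
    have h2 := hc1.2 ⟨r • u, hru, rfl⟩
    simp only at h2
    have hφr : φ r = f (r • u) / r ^ (k + 1) := by simp only [hφ, hh]
    rw [Real.norm_eq_abs, hφr, hB]
    rw [abs_div, abs_of_pos (pow_pos hr (k + 1))]
    have : a * r⁻¹ = a / r := by rw [div_eq_mul_inv]
    linarith [h2]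
  have HB : ContinuousOn B (Set.Icc r s) := by
    apply ContinuousOn.sub continuousOn_const
    exact continuousOn_const.mul
      (ContinuousOn.inv₀ continuousOn_id (fun t ht => (lt_of_lt_of_le hr ht.1).ne'))
  have HB' : ∀ x ∈ Set.Ico r s, HasDerivWithinAt B ((fun t => a / t ^ 2) x) (Set.Ici x) x :=
    fun x hx => (hBderiv x (lt_of_lt_of_le hr hx.1).ne').hasDerivWithinAt
  have Hbound : ∀ x ∈ Set.Ico r s, ‖φ' x‖ ≤ (fun t => a / t ^ 2) x := by
    intro t ht
    have ht0 : 0 < t := lt_of_lt_of_le hr ht.1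
    have hnorm : ‖t • u‖ = t := by
      rw [norm_smul, Real.norm_eq_abs, abs_of_pos ht0, hu1, mul_one]
    have hlin : fderiv ℝ f (t • u) (t • u) = t * fderiv ℝ f (t • u) u := by
      rw [(fderiv ℝ f (t • u)).map_smul]; simp
    have hb := hhom (t • u)
    rw [hlin, hnorm] at hb
    set d := fderiv ℝ f (t • u) u with hd
    have hnum : d * t ^ (k + 1) - h t * ((↑(k + 1) : ℝ) * t ^ k)
        = t ^ k * (t * d - (↑(k + 1) : ℝ) * f (t • u)) := by
      simp only [hh]; ring
    rw [Real.norm_eq_abs, hφ']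
    simp only
    rw [hnum, abs_div, abs_mul, abs_of_pos (pow_pos ht0 k),
      abs_of_pos (pow_pos (pow_pos ht0 (k + 1)) 2)]
    rw [div_le_div_iff₀ (by positivity) (by positivity)]
    calc t ^ k * |t * d - (↑(k + 1) : ℝ) * f (t • u)| * t ^ 2
        ≤ t ^ k * (a * t ^ k) * t ^ 2 := by
          have h3 := mul_le_mul_of_nonneg_left hb (pow_pos ht0 k).le
          nlinarith [pow_pos ht0 k, pow_pos ht0 2]
      _ = a * (t ^ (k + 1)) ^ 2 := by ring
  have key := image_norm_le_of_norm_deriv_right_le_deriv_boundary' Hf Hf' Ha HB HB' Hbound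
  have hfinal := key ⟨hθ, le_refl s⟩
  have hφs : φ s = f θ / s ^ (k + 1) := by simp only [hφ, hh, ← hθu]
  rw [Real.norm_eq_abs, hφs, abs_div, abs_of_pos (pow_pos hs0 (k + 1)), hB] at hfinal
  have has : 0 ≤ a * s⁻¹ := mul_nonneg ha (inv_pos.mpr hs0).le
  have hkey : |f θ| / s ^ (k + 1) ≤ a / r + c1 := by linarith
  calc |f θ| = |f θ| / s ^ (k + 1) * s ^ (k + 1) := by field_simp
    _ ≤ (a / r + c1) * s ^ (k + 1) :=
        mul_le_mul_of_nonneg_right hkey (pow_pos hs0 _).le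
end

section
/- Let $f : \mathbb{R}^D \to \mathbb{R}$ be continuously differentiable and satisfy $|\langle \nabla f(\theta), \theta \rangle - M f(\theta)| \leq p'(\|\theta\|)$ for all $\theta$, where $p(x) = \sum_{i=0}^M a_i x^i$ has non-negative coefficients and $M \geq 1$. Then for every $\theta$, the limit $f_H(\theta) := \lim_{r \to +\infty} f(r\theta)/r^M$ exists, $f_H$ is $M$-homogeneous (i.e. $f_H(c\theta) = c^M f_H(\theta)$ for all $c > 0$), and $|f(\theta) - f_H(\theta)| \leq p_a(\|\theta\|)$ where $p_a(x) = \sum_{i=1}^{M-1} \frac{(i+1)a_{i+1}}{M-i}x^i + \frac{a_1}{M - 1/2}$. -/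
open Finset Filter Topology

noncomputable def Bfun {D : ℕ} (M : ℕ) (a : ℕ → ℝ) (θ : EuclideanSpace ℝ (Fin D)) (r : ℝ) : ℝ :=
  ∑ i ∈ Icc 1 M, ((i : ℝ) * a i * ‖θ‖ ^ (i - 1) / ((M : ℝ) + 1 - i)) * (r ^ (M + 1 - i))⁻¹

lemma Bnonneg {D : ℕ} (M : ℕ) (a : ℕ → ℝ) (ha : ∀ i, 0 ≤ a i)
    (θ : EuclideanSpace ℝ (Fin D)) {r : ℝ} (hr : 0 < r) : 0 ≤ Bfun M a θ r := by
  apply Finset.sum_nonneg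
  intro i hi
  rw [Finset.mem_Icc] at hi
  have hiM : (i : ℝ) ≤ M := Nat.cast_le.2 hi.2
  have hd : 0 < (M : ℝ) + 1 - i := by linarith
  have := ha i
  positivity

lemma Btendsto {D : ℕ} (M : ℕ) (a : ℕ → ℝ) (θ : EuclideanSpace ℝ (Fin D)) :
    Tendsto (Bfun M a θ) atTop (𝓝 0) := by
  have : Tendsto (fun r : ℝ => ∑ i ∈ Icc 1 M,
      ((i : ℝ) * a i * ‖θ‖ ^ (i - 1) / ((M : ℝ) + 1 - i)) * (r ^ (M + 1 - i))⁻¹) atTop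
      (𝓝 (∑ i ∈ Icc 1 M, (0:ℝ))) := by
    apply tendsto_finset_sum
    intro i hi
    rw [Finset.mem_Icc] at hi
    have hk : M + 1 - i ≠ 0 := by omega
    have h1 : Tendsto (fun r : ℝ => (r ^ (M + 1 - i))⁻¹) atTop (𝓝 0) :=
      (tendsto_pow_atTop hk).inv_tendsto_atTop
    simpa using h1.const_mul ((i : ℝ) * a i * ‖θ‖ ^ (i - 1) / ((M : ℝ) + 1 - i))
  rw [Finset.sum_const_zero] at this; exact this

lemma derivG {D : ℕ} {f : EuclideanSpace ℝ (Fin D) → ℝ} (hf : ContDiff ℝ 1 f)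
    (m : ℕ) (θ : EuclideanSpace ℝ (Fin D)) {r : ℝ} (hr : 0 < r) :
    HasDerivAt (fun r : ℝ => f (r • θ) / r ^ (m + 1))
      (((fderiv ℝ f (r • θ)) (r • θ) - ((m : ℝ) + 1) * f (r • θ)) / r ^ (m + 2)) r := by
  have hF : HasDerivAt (fun r : ℝ => f (r • θ)) ((fderiv ℝ f (r • θ)) θ) r := by
    have h1 : HasDerivAt (fun r : ℝ => r • θ) θ r := by
      simpa using (hasDerivAt_id r).smul_const θ
    exact ((hf.differentiable one_ne_zero).differentiableAt.hasFDerivAt).comp_hasDerivAt r h1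
  have h2 := hF.div (hasDerivAt_pow (m + 1) r) (pow_ne_zero _ hr.ne')
  refine HasDerivAt.congr_deriv h2 ?_
  have hmap : (fderiv ℝ f (r • θ)) (r • θ) = r * (fderiv ℝ f (r • θ)) θ := by
    rw [map_smul]; rfl
  rw [hmap]
  have hr' : r ≠ 0 := hr.ne'
  simp only [Nat.add_sub_cancel]; push_cast
  field_simp
  ring

lemma derivB {D : ℕ} (M : ℕ) (a : ℕ → ℝ) (θ : EuclideanSpace ℝ (Fin D)) {r : ℝ} (hr : 0 < r) :
    HasDerivAt (Bfun M a θ)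
      (-∑ i ∈ Icc 1 M, (i : ℝ) * a i * ‖θ‖ ^ (i - 1) * (r ^ (M + 2 - i))⁻¹) r := by
  rw [← Finset.sum_neg_distrib]
  apply HasDerivAt.fun_sum
  intro i hi
  rw [Finset.mem_Icc] at hi
  obtain ⟨hi1, hi2⟩ := hi
  obtain ⟨k, hk⟩ : ∃ k, M + 1 - i = k + 1 := ⟨M - i, by omega⟩
  have hk2 : M + 2 - i = k + 2 := by omega
  rw [hk, hk2]
  have h1 : HasDerivAt (fun r : ℝ => (r ^ (k + 1))⁻¹)
      (-(((k : ℝ) + 1) * r ^ k) / (r ^ (k + 1)) ^ 2) r := by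
    have h := (hasDerivAt_pow (k + 1) r).inv (pow_ne_zero _ hr.ne'); simp at h; exact h
  have h2 := h1.const_mul ((i : ℝ) * a i * ‖θ‖ ^ (i - 1) / ((M : ℝ) + 1 - i))
  refine HasDerivAt.congr_deriv h2 ?_
  have hMi : ((M : ℝ) + 1 - i) = ((k : ℝ) + 1) := by
    have hMik : M = i + k := by omega
    rw [hMik]; push_cast; ring
  rw [hMi]
  have hne : ((k : ℝ) + 1) ≠ 0 := by positivity
  have hr' : r ≠ 0 := hr.ne'
  field_simp
  ring

lemma keyIneq {D : ℕ} (m : ℕ) {a : ℕ → ℝ}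
    {f : EuclideanSpace ℝ (Fin D) → ℝ} (hf : ContDiff ℝ 1 f)
    (hhom : ∀ θ, |fderiv ℝ f θ θ - ((m : ℝ) + 1) * f θ| ≤
      ∑ i ∈ Icc 1 (m + 1), (i : ℝ) * a i * ‖θ‖ ^ (i - 1))
    (θ : EuclideanSpace ℝ (Fin D)) {s t : ℝ} (hs : 1 ≤ s) (hst : s ≤ t) :
    |f (t • θ) / t ^ (m + 1) - f (s • θ) / s ^ (m + 1)| ≤
      Bfun (m + 1) a θ s - Bfun (m + 1) a θ t := by
  set g : ℝ → ℝ := fun r => f (r • θ) / r ^ (m + 1) with hg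
  set Bf : ℝ → ℝ := Bfun (m + 1) a θ with hB
  have hbound : ∀ x : ℝ, 0 < x →
      |((fderiv ℝ f (x • θ)) (x • θ) - ((m : ℝ) + 1) * f (x • θ)) / x ^ (m + 2)| ≤
        ∑ i ∈ Icc 1 (m + 1), (i : ℝ) * a i * ‖θ‖ ^ (i - 1) * (x ^ (m + 1 + 2 - i))⁻¹ := by
    intro x hx
    have h1 := hhom (x • θ)
    rw [abs_div, abs_of_pos (pow_pos hx _)]
    calc |(fderiv ℝ f (x • θ)) (x • θ) - ((m : ℝ) + 1) * f (x • θ)| / x ^ (m + 2)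
        ≤ (∑ i ∈ Icc 1 (m + 1), (i : ℝ) * a i * ‖x • θ‖ ^ (i - 1)) / x ^ (m + 2) := by
          gcongr
      _ = _ := by
          rw [Finset.sum_div]
          refine Finset.sum_congr rfl fun i hi => ?_
          rw [Finset.mem_Icc] at hi
          rw [norm_smul, Real.norm_eq_abs, abs_of_pos hx, mul_pow]
          have hexp : m + 2 = (i - 1) + (m + 1 + 2 - i) := by omega
          rw [hexp, pow_add]
          have hx' : x ≠ 0 := hx.ne'
          field_simp
  have hderivs : ∀ x : ℝ, 0 < x → HasDerivAt (fun r => g r - Bf r)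
      ((((fderiv ℝ f (x • θ)) (x • θ) - ((m : ℝ) + 1) * f (x • θ)) / x ^ (m + 2)) -
        (-∑ i ∈ Icc 1 (m + 1), (i : ℝ) * a i * ‖θ‖ ^ (i - 1) * (x ^ (m + 1 + 2 - i))⁻¹)) x :=
    fun x hx => (derivG hf m θ hx).sub (derivB (m + 1) a θ hx)
  have hderivs' : ∀ x : ℝ, 0 < x → HasDerivAt (fun r => g r + Bf r)
      ((((fderiv ℝ f (x • θ)) (x • θ) - ((m : ℝ) + 1) * f (x • θ)) / x ^ (m + 2)) +
        (-∑ i ∈ Icc 1 (m + 1), (i : ℝ) * a i * ‖θ‖ ^ (i - 1) * (x ^ (m + 1 + 2 - i))⁻¹)) x :=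
    fun x hx => (derivG hf m θ hx).add (derivB (m + 1) a θ hx)
  have hpos : ∀ x : ℝ, x ∈ Set.Ici (1:ℝ) → (0:ℝ) < x := fun x hx => lt_of_lt_of_le one_pos hx
  have mono : MonotoneOn (fun r => g r - Bf r) (Set.Ici 1) := by
    apply monotoneOn_of_deriv_nonneg (convex_Ici 1)
    · exact fun x hx => ((hderivs x (hpos x hx)).continuousAt).continuousWithinAt
    · rw [interior_Ici]
      exact fun x hx => ((hderivs x (lt_trans one_pos hx)).differentiableAt).differentiableWithinAt
    · intro x hx
      rw [interior_Ici] at hx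
      have hx0 : (0:ℝ) < x := lt_trans one_pos hx
      rw [(hderivs x hx0).deriv]
      have h := abs_le.1 (hbound x hx0)
      linarith [h.1]
  have anti : AntitoneOn (fun r => g r + Bf r) (Set.Ici 1) := by
    apply antitoneOn_of_deriv_nonpos (convex_Ici 1)
    · exact fun x hx => ((hderivs' x (hpos x hx)).continuousAt).continuousWithinAt
    · rw [interior_Ici]
      exact fun x hx => ((hderivs' x (lt_trans one_pos hx)).differentiableAt).differentiableWithinAt
    · intro x hx
      rw [interior_Ici] at hx
      have hx0 : (0:ℝ) < x := lt_trans one_pos hx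
      rw [(hderivs' x hx0).deriv]
      have h := abs_le.1 (hbound x hx0)
      linarith [h.2]
  have ht : (1:ℝ) ≤ t := le_trans hs hst
  have h1 := mono (Set.mem_Ici.2 hs) (Set.mem_Ici.2 ht) hst
  have h2 := anti (Set.mem_Ici.2 hs) (Set.mem_Ici.2 ht) hst
  rw [abs_le]
  constructor <;> simp only at h1 h2 <;> [linarith; linarith]

lemma existsLim {D : ℕ} (m : ℕ) {a : ℕ → ℝ} (ha : ∀ i, 0 ≤ a i)
    {f : EuclideanSpace ℝ (Fin D) → ℝ} (hf : ContDiff ℝ 1 f)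
    (hhom : ∀ θ, |fderiv ℝ f θ θ - ((m : ℝ) + 1) * f θ| ≤
      ∑ i ∈ Icc 1 (m + 1), (i : ℝ) * a i * ‖θ‖ ^ (i - 1))
    (θ : EuclideanSpace ℝ (Fin D)) :
    ∃ L, Tendsto (fun r : ℝ => f (r • θ) / r ^ (m + 1)) atTop (𝓝 L) ∧
      ∀ t : ℝ, 1 ≤ t → |f (t • θ) / t ^ (m + 1) - L| ≤ Bfun (m + 1) a θ t := by
  have key : ∀ {s t : ℝ}, 1 ≤ s → s ≤ t →
      |f (t • θ) / t ^ (m + 1) - f (s • θ) / s ^ (m + 1)| ≤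
        Bfun (m + 1) a θ s - Bfun (m + 1) a θ t := fun hs hst => keyIneq m hf hhom θ hs hst
  have hBnn : ∀ {r : ℝ}, 0 < r → 0 ≤ Bfun (m + 1) a θ r := fun hr => Bnonneg (m + 1) a ha θ hr
  have hB0 : Tendsto (Bfun (m + 1) a θ) atTop (𝓝 0) := Btendsto (m + 1) a θ
  set g : ℝ → ℝ := fun r => f (r • θ) / r ^ (m + 1) with hg
  set Bf : ℝ → ℝ := Bfun (m + 1) a θ with hB
  have hBanti : ∀ {s t : ℝ}, 1 ≤ s → s ≤ t → Bf t ≤ Bf s := by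
    intro s t hs hst
    have h := key hs hst
    have := abs_nonneg (g t - g s)
    linarith
  have hcauchy : CauchySeq (fun n : ℕ => g ((n : ℝ) + 1)) := by
    apply cauchySeq_of_le_tendsto_0 (fun n : ℕ => Bf ((n : ℝ) + 1))
    · intro n k N hn hk
      rw [Real.dist_eq]
      have hle : ∀ p q : ℕ, p ≤ q → N ≤ p →
          |g ((p : ℝ) + 1) - g ((q : ℝ) + 1)| ≤ Bf ((N : ℝ) + 1) := by
        intro p q hpq hNp
        have hp1 : (1 : ℝ) ≤ (p : ℝ) + 1 := by
          have := Nat.cast_nonneg (α := ℝ) p; linarith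
        have hpq' : (p : ℝ) + 1 ≤ (q : ℝ) + 1 := by
          have : (p : ℝ) ≤ q := Nat.cast_le.2 hpq
          linarith
        have h1 := key hp1 hpq'
        rw [abs_sub_comm]
        have h2 : Bf ((p : ℝ) + 1) ≤ Bf ((N : ℝ) + 1) := by
          apply hBanti (by have := Nat.cast_nonneg (α := ℝ) N; linarith)
          have : (N : ℝ) ≤ p := Nat.cast_le.2 hNp
          linarith
        have h3 : 0 ≤ Bf ((q : ℝ) + 1) := hBnn (by positivity)
        calc |g ((q:ℝ)+1) - g ((p:ℝ)+1)| ≤ Bf ((p:ℝ)+1) - Bf ((q:ℝ)+1) := h1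
          _ ≤ Bf ((N:ℝ)+1) := by linarith
      rcases le_total n k with h | h
      · exact hle n k h hn
      · rw [abs_sub_comm]; exact hle k n h hk
    · exact hB0.comp (tendsto_atTop_add_const_right atTop 1 tendsto_natCast_atTop_atTop)
  obtain ⟨L, hL⟩ := cauchySeq_tendsto_of_complete hcauchy
  have claim : ∀ t : ℝ, 1 ≤ t → |g t - L| ≤ Bf t := by
    intro t ht
    have htend : Tendsto (fun n : ℕ => |g t - g ((n : ℝ) + 1)|) atTop (𝓝 |g t - L|) :=
      (tendsto_const_nhds.sub hL).abs
    apply le_of_tendsto htend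
    filter_upwards [eventually_ge_atTop ⌈t⌉₊] with n hn
    have htn : t ≤ (n : ℝ) + 1 := by
      have h1 : t ≤ (⌈t⌉₊ : ℝ) := Nat.le_ceil t
      have h2 : ((⌈t⌉₊ : ℕ) : ℝ) ≤ (n : ℝ) := Nat.cast_le.2 hn
      linarith
    have h1 := key ht htn
    rw [abs_sub_comm] at h1
    have h2 : 0 ≤ Bf ((n : ℝ) + 1) := hBnn (by positivity)
    linarith
  refine ⟨L, ?_, claim⟩
  rw [tendsto_iff_dist_tendsto_zero]
  refine squeeze_zero' (Eventually.of_forall fun t => dist_nonneg) ?_ hB0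
  filter_upwards [eventually_ge_atTop (1:ℝ)] with t ht
  rw [Real.dist_eq]
  exact claim t ht

/-- If `f` is `C¹` with `|⟨∇f(θ),θ⟩ - Mf(θ)| ≤ p'(‖θ‖)` for a polynomial
`p(x) = ∑_{i=0}^M aᵢ xⁱ` with non-negative coefficients, then `f_H(θ) = lim_{r→∞} f(rθ)/r^M`
exists, is `M`-homogeneous, and `|f(θ) - f_H(θ)| ≤ p_a(‖θ‖)`. -/
theorem stmt6 (D M : ℕ) (hM : 1 ≤ M) (a : ℕ → ℝ) (ha : ∀ i, 0 ≤ a i)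
    (f : EuclideanSpace ℝ (Fin D) → ℝ) (hf : ContDiff ℝ 1 f)
    (hhom : ∀ θ, |fderiv ℝ f θ θ - (M : ℝ) * f θ| ≤
      ∑ i ∈ Icc 1 M, (i : ℝ) * a i * ‖θ‖ ^ (i - 1)) :
    ∃ fH : EuclideanSpace ℝ (Fin D) → ℝ,
      (∀ θ, Tendsto (fun r : ℝ => f (r • θ) / r ^ M) atTop (𝓝 (fH θ))) ∧
      (∀ c : ℝ, 0 < c → ∀ θ, fH (c • θ) = c ^ M * fH θ) ∧
      (∀ θ, |f θ - fH θ| ≤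
        (∑ i ∈ Icc 1 (M - 1), ((i : ℝ) + 1) * a (i + 1) / ((M : ℝ) - i) * ‖θ‖ ^ i)
          + a 1 / ((M : ℝ) - 1 / 2)) := by
  obtain ⟨m, rfl⟩ : ∃ m, M = m + 1 := ⟨M - 1, by omega⟩
  have hhom' : ∀ θ, |fderiv ℝ f θ θ - ((m : ℝ) + 1) * f θ| ≤
      ∑ i ∈ Icc 1 (m + 1), (i : ℝ) * a i * ‖θ‖ ^ (i - 1) := by
    intro θ
    have := hhom θ
    push_cast at this ⊢
    exact this
  choose fH h1 h2 using existsLim m ha hf hhom'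
  refine ⟨fH, h1, ?_, ?_⟩
  · intro c hc θ
    have ha1 : Tendsto (fun r : ℝ => f (r • (c • θ)) / r ^ (m + 1)) atTop (𝓝 (fH (c • θ))) :=
      h1 (c • θ)
    have hmul : Tendsto (fun r : ℝ => r * c) atTop atTop :=
      Tendsto.atTop_mul_const hc tendsto_id
    have ha2 : Tendsto (fun r : ℝ => f ((r * c) • θ) / (r * c) ^ (m + 1)) atTop (𝓝 (fH θ)) :=
      (h1 θ).comp hmul
    have ha3 := ha2.const_mul (c ^ (m + 1))
    have heq : (fun r : ℝ => c ^ (m + 1) * (f ((r * c) • θ) / (r * c) ^ (m + 1)))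
        =ᶠ[atTop] fun r : ℝ => f (r • (c • θ)) / r ^ (m + 1) := by
      filter_upwards [eventually_gt_atTop (0:ℝ)] with r hr
      rw [smul_smul]
      have hr' : r ≠ 0 := hr.ne'
      have hc' : c ≠ 0 := hc.ne'
      rw [mul_pow]
      field_simp
    exact tendsto_nhds_unique ha1 (ha3.congr' heq)
  · intro θ
    have hb := h2 θ 1 le_rfl
    simp only [one_smul, one_pow, div_one] at hb
    refine le_trans hb ?_
    -- now show Bfun (m+1) a θ 1 ≤ RHS
    have hsplit : Icc 1 (m + 1) = insert 1 (Icc 2 (m + 1)) := by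
      ext x; simp only [Finset.mem_Icc, Finset.mem_insert]; omega
    have hmap : Icc 2 (m + 1) = (Icc 1 m).map ⟨fun x => x + 1, add_left_injective 1⟩ := by
      ext x
      simp only [Finset.mem_Icc, Finset.mem_map, Function.Embedding.coeFn_mk]
      constructor
      · rintro ⟨h1, h2⟩; exact ⟨x - 1, by omega, by omega⟩
      · rintro ⟨y, ⟨hy1, hy2⟩, rfl⟩; omega
    have hBval : Bfun (m + 1) a θ 1 = a 1 / ((m : ℝ) + 1) +
        ∑ i ∈ Icc 1 m, ((i : ℝ) + 1) * a (i + 1) / (((m : ℝ) + 1) - i) * ‖θ‖ ^ i := by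
      unfold Bfun
      rw [hsplit, Finset.sum_insert (by simp), hmap, Finset.sum_map]
      congr 1
      · push_cast
        norm_num
      · refine Finset.sum_congr rfl fun i hi => ?_
        simp only [Function.Embedding.coeFn_mk, Nat.add_sub_cancel, one_pow, inv_one, mul_one]
        push_cast
        ring
    rw [hBval]
    have hsame : (m + 1) - 1 = m := by omega
    rw [hsame]
    have hd1 : (0:ℝ) < (m : ℝ) + 1 - 1 / 2 := by
      have := Nat.cast_nonneg (α := ℝ) m; linarith
    have hle : a 1 / ((m : ℝ) + 1) ≤ a 1 / (((m : ℕ) + 1 : ℝ) - 1 / 2) := by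
      apply div_le_div_of_nonneg_left (ha 1) ?_ ?_
      · push_cast; linarith
      · push_cast; linarith
    push_cast at hle ⊢
    linarith
end

section
/- Let $f : \mathbb{R}^D \to \mathbb{R}$ be continuously differentiable with $|\langle \nabla f(\theta),\theta\rangle - Mf(\theta)| \leq p'(\|\theta\|)$ and $\|\nabla f(\theta)\| \leq q'(\|\theta\|)$ for polynomials $p, q$ with non-negative coefficients and degree at most $M$. Then the homogenization $f_H(\theta) = \lim_{r\to\infty} f(r\theta)/r^M$ restricted to the unit sphere is Lipschitz continuous: there is a constant $C$ (depending only on $M$ and the coefficients of $q$) such that $|f_H(\theta_1) - f_H(\theta_2)| \leq C\|\theta_1 - \theta_2\|$ for all unit vectors $\theta_1, \theta_2$. -/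
open Finset Filter Topology

/-- If `f` is `C¹`, near-`M`-homogeneous with
`|⟨∇f(θ),θ⟩ - Mf(θ)| ≤ p'(‖θ‖)` and `‖∇f(θ)‖ ≤ q'(‖θ‖)` for polynomials `p, q` with
non-negative coefficients of degree ≤ M, then the homogenization `f_H` is Lipschitz on
the unit sphere. -/
theorem stmt7 (D M : ℕ) (hM : 1 ≤ M) (pa qa : ℕ → ℝ)
    (hpa : ∀ i, 0 ≤ pa i) (hqa : ∀ i, 0 ≤ qa i)
    (f : EuclideanSpace ℝ (Fin D) → ℝ) (hf : ContDiff ℝ 1 f)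
    (hhom : ∀ θ, |fderiv ℝ f θ θ - (M : ℝ) * f θ| ≤
      ∑ i ∈ Icc 1 M, (i : ℝ) * pa i * ‖θ‖ ^ (i - 1))
    (hgrad : ∀ θ, ‖fderiv ℝ f θ‖ ≤ ∑ i ∈ Icc 1 M, (i : ℝ) * qa i * ‖θ‖ ^ (i - 1))
    (fH : EuclideanSpace ℝ (Fin D) → ℝ)
    (hfH : ∀ θ, Tendsto (fun r : ℝ => f (r • θ) / r ^ M) atTop (𝓝 (fH θ))) :
    ∃ C : ℝ, ∀ θ₁ θ₂ : EuclideanSpace ℝ (Fin D), ‖θ₁‖ = 1 → ‖θ₂‖ = 1 →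
      |fH θ₁ - fH θ₂| ≤ C * ‖θ₁ - θ₂‖ := by
  refine ⟨∑ i ∈ Icc 1 M, (i : ℝ) * qa i, fun θ₁ θ₂ h1 h2 => ?_⟩
  set C : ℝ := ∑ i ∈ Icc 1 M, (i : ℝ) * qa i with hC
  have hdiff : Differentiable ℝ f := hf.differentiable one_ne_zero
  -- key bound for all r ≥ 1
  have key : ∀ r : ℝ, 1 ≤ r →
      |f (r • θ₁) / r ^ M - f (r • θ₂) / r ^ M| ≤ C * ‖θ₁ - θ₂‖ := by
    intro r hr
    have hr0 : (0:ℝ) < r := lt_of_lt_of_le one_pos hr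
    have hrM : (0:ℝ) < r ^ M := pow_pos hr0 M
    -- gradient bound on closed ball of radius r
    set Cr : ℝ := ∑ i ∈ Icc 1 M, (i : ℝ) * qa i * r ^ (i - 1) with hCr
    have hbound : ∀ x ∈ Metric.closedBall (0 : EuclideanSpace ℝ (Fin D)) r,
        ‖fderiv ℝ f x‖ ≤ Cr := by
      intro x hx
      refine (hgrad x).trans (Finset.sum_le_sum fun i hi => ?_)
      have hxr : ‖x‖ ≤ r := by simpa using Metric.mem_closedBall.mp hx
      have : ‖x‖ ^ (i - 1) ≤ r ^ (i - 1) :=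
        pow_le_pow_left₀ (norm_nonneg x) hxr _
      have hi0 : (0:ℝ) ≤ (i : ℝ) * qa i := mul_nonneg (Nat.cast_nonneg i) (hqa i)
      exact mul_le_mul_of_nonneg_left this hi0
    have hmem1 : r • θ₁ ∈ Metric.closedBall (0 : EuclideanSpace ℝ (Fin D)) r := by
      simp [Metric.mem_closedBall, norm_smul, h1, abs_of_pos hr0]
    have hmem2 : r • θ₂ ∈ Metric.closedBall (0 : EuclideanSpace ℝ (Fin D)) r := by
      simp [Metric.mem_closedBall, norm_smul, h2, abs_of_pos hr0]
    have hmvt : ‖f (r • θ₁) - f (r • θ₂)‖ ≤ Cr * ‖r • θ₁ - r • θ₂‖ :=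
      (convex_closedBall (0 : EuclideanSpace ℝ (Fin D)) r).norm_image_sub_le_of_norm_fderiv_le
        (fun x _ => hdiff x) hbound hmem2 hmem1
    have hnorm : ‖r • θ₁ - r • θ₂‖ = r * ‖θ₁ - θ₂‖ := by
      rw [← smul_sub, norm_smul, Real.norm_eq_abs, abs_of_pos hr0]
    rw [div_sub_div_same, abs_div, abs_of_pos hrM, div_le_iff₀ hrM]
    calc |f (r • θ₁) - f (r • θ₂)| ≤ Cr * (r * ‖θ₁ - θ₂‖) := by
          rw [← hnorm]; exact hmvt
      _ ≤ C * ‖θ₁ - θ₂‖ * r ^ M := by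
          have h1' : Cr * r ≤ C * r ^ M := by
            rw [hCr, hC, Finset.sum_mul, Finset.sum_mul]
            refine Finset.sum_le_sum fun i hi => ?_
            have hi1 : 1 ≤ i := (Finset.mem_Icc.mp hi).1
            have hiM : i ≤ M := (Finset.mem_Icc.mp hi).2
            have : r ^ (i - 1) * r = r ^ i := by
              rw [← pow_succ, Nat.sub_add_cancel hi1]
            rw [mul_assoc, this]
            have hpow : r ^ i ≤ r ^ M := pow_le_pow_right₀ hr hiM
            exact mul_le_mul_of_nonneg_left hpow
              (mul_nonneg (Nat.cast_nonneg i) (hqa i))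
          calc Cr * (r * ‖θ₁ - θ₂‖) = (Cr * r) * ‖θ₁ - θ₂‖ := by ring
            _ ≤ (C * r ^ M) * ‖θ₁ - θ₂‖ :=
                mul_le_mul_of_nonneg_right h1' (norm_nonneg _)
            _ = C * ‖θ₁ - θ₂‖ * r ^ M := by ring
  have htend : Tendsto (fun r : ℝ => |f (r • θ₁) / r ^ M - f (r • θ₂) / r ^ M|)
      atTop (𝓝 |fH θ₁ - fH θ₂|) := ((hfH θ₁).sub (hfH θ₂)).abs
  exact le_of_tendsto htend (eventually_atTop.mpr ⟨1, fun r hr => key r hr⟩)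
end

section
/- Consider the ODE system $\dot{w}_t = \frac{1}{n}\sum_{i=1}^n e^{-y_i f(\theta_t; x_i)}(1 + c_L a_t) y_i x_i$, $\dot{a}_t = \frac{1}{n}\sum_{i=1}^n e^{-y_i f(\theta_t; x_i)} c_L\, y_i x_i^\top w_t$, initialized at $(w_0, a_0) = (0, 0)$, where $c_L > 0$ and $f(\theta; x) = (2 + 2c_L a) w^\top x$. Then for all $t \geq 0$: $\left(a_t + \frac{1}{c_L}\right)^2 = \|w_t\|^2 + \frac{1}{c_L^2}$. -/
open Finset
open scoped RealInnerProductSpace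

/-- For the symmetric two-layer gradient-flow ODE with zero initialization,
the balancing identity `(a_t + 1/c_L)² = ‖w_t‖² + 1/c_L²` holds for all `t ≥ 0`. -/
theorem stmt12 (n d : ℕ) (hn : 0 < n)
    (x : Fin n → EuclideanSpace ℝ (Fin d)) (y : Fin n → ℝ)
    (hy : ∀ i, y i = 1 ∨ y i = -1)
    (cL : ℝ) (hcL : 0 < cL)
    (w : ℝ → EuclideanSpace ℝ (Fin d)) (a : ℝ → ℝ)
    (hw0 : w 0 = 0) (ha0 : a 0 = 0)
    (hw : ∀ t, HasDerivAt w
      (∑ i, ((1 / n) * Real.exp (-(y i * ((2 + 2 * cL * a t) * ⟪w t, x i⟫))) *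
        ((1 + cL * a t) * y i)) • x i) t)
    (ha : ∀ t, HasDerivAt a
      ((1 / n) * ∑ i, Real.exp (-(y i * ((2 + 2 * cL * a t) * ⟪w t, x i⟫))) *
        (cL * y i * ⟪x i, w t⟫)) t) :
    ∀ t, 0 ≤ t → (a t + 1 / cL) ^ 2 = ‖w t‖ ^ 2 + 1 / cL ^ 2 := by
  have hn' : (n : ℝ) ≠ 0 := Nat.cast_ne_zero.mpr hn.ne'
  set F : ℝ → ℝ := fun t => (a t + 1 / cL) ^ 2 - ⟪w t, w t⟫ with hFdef
  have hF : ∀ t, HasDerivAt F 0 t := by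
    intro t
    set W' := ∑ i, ((1 / n) * Real.exp (-(y i * ((2 + 2 * cL * a t) * ⟪w t, x i⟫))) *
        ((1 + cL * a t) * y i)) • x i with hW'
    set A' := (1 / n) * ∑ i, Real.exp (-(y i * ((2 + 2 * cL * a t) * ⟪w t, x i⟫))) *
        (cL * y i * ⟪x i, w t⟫) with hA'
    have h1 : HasDerivAt (fun t => (a t + 1 / cL) ^ 2) (2 * (a t + 1 / cL) * A') t := by
      have h := ((ha t).add_const (1 / cL)).fun_pow 2
      refine h.congr_deriv ?_
      push_cast
      ring
    have h2 : HasDerivAt (fun t => (⟪w t, w t⟫ : ℝ))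
        (⟪w t, W'⟫ + ⟪W', w t⟫) t := (hw t).inner ℝ (hw t)
    have key : 2 * (a t + 1 / cL) * A' = ⟪w t, W'⟫ + ⟪W', w t⟫ := by
      have hs : (⟪w t, W'⟫ : ℝ) = ∑ i, ((1 / n) *
          Real.exp (-(y i * ((2 + 2 * cL * a t) * ⟪w t, x i⟫))) *
          ((1 + cL * a t) * y i)) * ⟪w t, x i⟫ := by
        rw [hW', inner_sum]
        exact Finset.sum_congr rfl fun i _ => real_inner_smul_right _ _ _
      have hs' : (⟪W', w t⟫ : ℝ) = ⟪w t, W'⟫ := real_inner_comm _ _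
      rw [hs', hs, hA']
      simp only [Finset.mul_sum, ← Finset.sum_add_distrib]
      refine Finset.sum_congr rfl fun i _ => ?_
      have hi : (⟪x i, w t⟫ : ℝ) = ⟪w t, x i⟫ := real_inner_comm _ _
      rw [hi]
      field_simp
      ring
    have h3 := h1.sub h2
    rw [← key, sub_self] at h3
    exact h3
  have hconst : ∀ t, F t = F 0 :=
    fun t => is_const_of_deriv_eq_zero (fun s => (hF s).differentiableAt)
      (fun s => (hF s).deriv) t 0
  intro t _
  have h0 : F 0 = 1 / cL ^ 2 := by
    simp [hFdef, hw0, ha0, div_pow]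
  have hc := hconst t
  rw [h0] at hc
  have hn2 : (⟪w t, w t⟫ : ℝ) = ‖w t‖ ^ 2 := real_inner_self_eq_norm_sq _
  simp only [hFdef] at hc
  linarith [hc, hn2]
end

section
/- Let the empirical exponential loss be $\mathcal{L}(\theta) = \frac{1}{n}\sum_i e^{-\bar f_i(\theta)}$ with $\bar f_i$ continuously differentiable satisfying $\langle \nabla \bar f_i(\theta), \theta \rangle \geq M \bar f_i(\theta) - p'(\|\theta\|)$ for all $i$ and $\theta$. Then $v := \langle -\nabla \mathcal{L}(\theta), \theta \rangle \geq M\mathcal{L}(\theta)\log\frac{1}{n\mathcal{L}(\theta)} - p'(\|\theta\|)\mathcal{L}(\theta)$. In particular, if additionally $M\log\frac{1}{n\mathcal{L}(\theta)} > p'(\|\theta\|)$, then $\langle -\nabla\mathcal{L}(\theta), \theta\rangle > 0$. -/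
open Finset

/-- For the exponential loss `L(θ) = (1/n)∑ᵢ e^{-f̄ᵢ(θ)}` with each `f̄ᵢ`
`C¹` and `⟨∇f̄ᵢ(θ),θ⟩ ≥ M f̄ᵢ(θ) - p'(‖θ‖)`, we have
`⟨-∇L(θ),θ⟩ ≥ M L(θ) log(1/(nL(θ))) - p'(‖θ‖) L(θ)`; in particular
`⟨-∇L(θ),θ⟩ > 0` whenever `M log(1/(nL(θ))) > p'(‖θ‖)`. -/
theorem stmt14 (n D N M : ℕ) (hn : 0 < n) (hM : 1 ≤ M)
    (a : ℕ → ℝ) (ha : ∀ i, 0 ≤ a i)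
    (f : Fin n → EuclideanSpace ℝ (Fin D) → ℝ) (hf : ∀ i, ContDiff ℝ 1 (f i))
    (P : ℝ → ℝ) (hP : ∀ x, P x = ∑ i ∈ Icc 1 N, (i : ℝ) * a i * x ^ (i - 1))
    (L : EuclideanSpace ℝ (Fin D) → ℝ)
    (hL : ∀ θ, L θ = (1 / n) * ∑ i, Real.exp (-(f i θ)))
    (hhom : ∀ i θ, (M : ℝ) * f i θ - P ‖θ‖ ≤ fderiv ℝ (f i) θ θ) :
    ∀ θ, (M : ℝ) * L θ * Real.log (1 / (n * L θ)) - P ‖θ‖ * L θ ≤ -(fderiv ℝ L θ θ) ∧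
      (P ‖θ‖ < (M : ℝ) * Real.log (1 / (n * L θ)) → 0 < -(fderiv ℝ L θ θ)) := by
  haveI : Nonempty (Fin n) := Fin.pos_iff_nonempty.mp hn
  intro θ
  have hn' : (n : ℝ) ≠ 0 := Nat.cast_ne_zero.mpr hn.ne'
  set S : ℝ := ∑ i, Real.exp (-(f i θ)) with hS
  have hSpos : 0 < S := Finset.sum_pos (fun i _ => Real.exp_pos _) Finset.univ_nonempty
  have hLθ : L θ = (1 / n) * S := hL θ
  have hnL : (n : ℝ) * L θ = S := by rw [hLθ]; field_simp
  have hLpos : 0 < L θ := by rw [hLθ]; positivity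
  -- derivative computation
  have hderiv : HasFDerivAt L ((1/(n:ℝ)) • ∑ i, Real.exp (-(f i θ)) • (-(fderiv ℝ (f i) θ))) θ := by
    have h1 : ∀ i : Fin n, HasFDerivAt (fun θ => Real.exp (-(f i θ)))
        (Real.exp (-(f i θ)) • (-(fderiv ℝ (f i) θ))) θ := fun i =>
      ((((hf i).differentiable one_ne_zero) θ).hasFDerivAt.neg).exp
    have hsum := HasFDerivAt.fun_sum (fun i (_ : i ∈ Finset.univ) => h1 i)
    have h2 := hsum.const_mul (1/(n:ℝ))
    have hLeq : L = fun θ => (1/(n:ℝ)) * ∑ i, Real.exp (-(f i θ)) := funext hL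
    rw [hLeq]
    exact h2
  have hfd : fderiv ℝ L θ θ = (1/(n:ℝ)) * ∑ i, Real.exp (-(f i θ)) * (-(fderiv ℝ (f i) θ θ)) := by
    rw [hderiv.fderiv]
    simp [ContinuousLinearMap.sum_apply, Finset.mul_sum, mul_comm]
  have key : -(fderiv ℝ L θ θ) = (1/(n:ℝ)) * ∑ i, Real.exp (-(f i θ)) * (fderiv ℝ (f i) θ θ) := by
    rw [hfd]
    have h3 : (∑ i : Fin n, Real.exp (-(f i θ)) * -(fderiv ℝ (f i) θ θ))
        = -∑ i : Fin n, Real.exp (-(f i θ)) * (fderiv ℝ (f i) θ θ) := by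
      simp [mul_neg]
    rw [h3]; ring
  -- lower bound on each f i θ
  have hfi : ∀ i : Fin n, -Real.log S ≤ f i θ := by
    intro i
    have h1 : Real.exp (-(f i θ)) ≤ S :=
      Finset.single_le_sum (f := fun j => Real.exp (-(f j θ))) (fun j _ => (Real.exp_pos _).le) (Finset.mem_univ i)
    have h2 := Real.log_le_log (Real.exp_pos _) h1
    rw [Real.log_exp] at h2
    linarith
  have hlog : Real.log (1 / ((n:ℝ) * L θ)) = -Real.log S := by
    rw [hnL, one_div, Real.log_inv]
  -- main chain
  have step1 : (1/(n:ℝ)) * ∑ i, Real.exp (-(f i θ)) * ((M:ℝ) * f i θ - P ‖θ‖)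
      ≤ -(fderiv ℝ L θ θ) := by
    rw [key]
    apply mul_le_mul_of_nonneg_left _ (by positivity)
    apply Finset.sum_le_sum
    intro i _
    exact mul_le_mul_of_nonneg_left (hhom i θ) (Real.exp_pos _).le
  have step2 : (M:ℝ) * L θ * (-Real.log S) - P ‖θ‖ * L θ
      ≤ (1/(n:ℝ)) * ∑ i, Real.exp (-(f i θ)) * ((M:ℝ) * f i θ - P ‖θ‖) := by
    have hM0 : (0:ℝ) ≤ M := Nat.cast_nonneg M
    have hpt : ∀ i : Fin n, Real.exp (-(f i θ)) * ((M:ℝ) * (-Real.log S) - P ‖θ‖)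
        ≤ Real.exp (-(f i θ)) * ((M:ℝ) * f i θ - P ‖θ‖) := by
      intro i
      apply mul_le_mul_of_nonneg_left _ (Real.exp_pos _).le
      have := hfi i
      nlinarith
    calc (M:ℝ) * L θ * (-Real.log S) - P ‖θ‖ * L θ
        = (1/(n:ℝ)) * ∑ i, Real.exp (-(f i θ)) * ((M:ℝ) * (-Real.log S) - P ‖θ‖) := by
          rw [← Finset.sum_mul, ← hS, hLθ]; ring
      _ ≤ _ := mul_le_mul_of_nonneg_left (Finset.sum_le_sum fun i _ => hpt i) (by positivity)
  constructor
  · rw [hlog]; linarith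
  · intro hgt
    rw [hlog] at hgt
    have : 0 < L θ * ((M:ℝ) * (-Real.log S) - P ‖θ‖) := by
      apply mul_pos hLpos; linarith
    nlinarith
end

section
/- Let the empirical exponential loss be $\mathcal{L}(\theta) = \frac{1}{n}\sum_i e^{-\bar f_i(\theta)}$ with $\bar f_i$ continuously differentiable satisfying $\langle \nabla \bar f_i(\theta), \theta \rangle \leq M \bar f_i(\theta) + p'(\|\theta\|)$ for all $i, \theta$. Then $\langle -\nabla \mathcal{L}(\theta), \theta \rangle \leq M\mathcal{L}(\theta)\log\frac{1}{\mathcal{L}(\theta)} + p'(\|\theta\|)\mathcal{L}(\theta)$. -/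
open Finset

/-- For the exponential loss `L(θ) = (1/n)∑ᵢ e^{-f̄ᵢ(θ)}` with each `f̄ᵢ`
`C¹` and `⟨∇f̄ᵢ(θ),θ⟩ ≤ M f̄ᵢ(θ) + p'(‖θ‖)`, we have
`⟨-∇L(θ),θ⟩ ≤ M L(θ) log(1/L(θ)) + p'(‖θ‖) L(θ)`. -/
theorem stmt15 (n D N M : ℕ) (hn : 0 < n) (hM : 1 ≤ M)
    (a : ℕ → ℝ) (ha : ∀ i, 0 ≤ a i)
    (f : Fin n → EuclideanSpace ℝ (Fin D) → ℝ) (hf : ∀ i, ContDiff ℝ 1 (f i))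
    (P : ℝ → ℝ) (hP : ∀ x, P x = ∑ i ∈ Icc 1 N, (i : ℝ) * a i * x ^ (i - 1))
    (L : EuclideanSpace ℝ (Fin D) → ℝ)
    (hL : ∀ θ, L θ = (1 / n) * ∑ i, Real.exp (-(f i θ)))
    (hhom : ∀ i θ, fderiv ℝ (f i) θ θ ≤ (M : ℝ) * f i θ + P ‖θ‖) :
    ∀ θ, -(fderiv ℝ L θ θ) ≤ (M : ℝ) * L θ * Real.log (1 / L θ) + P ‖θ‖ * L θ := by
  have hLfun : L = fun θ => (1 / (n:ℝ)) * ∑ i, Real.exp (-(f i θ)) := funext hL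
  subst hLfun
  intro θ
  haveI : Nonempty (Fin n) := Fin.pos_iff_nonempty.mp hn
  have hn' : (0:ℝ) < n := by exact_mod_cast hn
  -- derivative
  have hfd : ∀ i, HasFDerivAt (f i) (fderiv ℝ (f i) θ) θ := fun i =>
    ((hf i).differentiable one_ne_zero).differentiableAt.hasFDerivAt
  have hgd : ∀ i, HasFDerivAt (fun θ => Real.exp (-(f i θ)))
      (Real.exp (-(f i θ)) • (-(fderiv ℝ (f i) θ))) θ := fun i => ((hfd i).neg).exp
  have hLd : HasFDerivAt (fun θ => (1 / (n:ℝ)) * ∑ i, Real.exp (-(f i θ)))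
      ((1 / (n:ℝ)) • ∑ i, Real.exp (-(f i θ)) • (-(fderiv ℝ (f i) θ))) θ := by
    simpa using (HasFDerivAt.sum (fun i _ => hgd i)).const_mul (1 / (n:ℝ))
  rw [hLd.fderiv]
  have hder : ((1 / (n:ℝ)) • ∑ i, Real.exp (-(f i θ)) • (-(fderiv ℝ (f i) θ))) θ
      = (1 / (n:ℝ)) * ∑ i, Real.exp (-(f i θ)) * (-(fderiv ℝ (f i) θ θ)) := by
    simp [ContinuousLinearMap.sum_apply, smul_eq_mul]
  rw [hder]
  set Lθ : ℝ := (1 / (n:ℝ)) * ∑ i, Real.exp (-(f i θ)) with hLθ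
  have hLpos : 0 < Lθ := by
    rw [hLθ]; positivity
  -- step 1: term bound
  have step1 : -((1 / (n:ℝ)) * ∑ i, Real.exp (-(f i θ)) * (-(fderiv ℝ (f i) θ θ)))
      ≤ (M:ℝ) * ((1 / (n:ℝ)) * ∑ i, Real.exp (-(f i θ)) * f i θ) + P ‖θ‖ * Lθ := by
    have h1 : ∀ i : Fin n, Real.exp (-(f i θ)) * (fderiv ℝ (f i) θ θ)
        ≤ Real.exp (-(f i θ)) * ((M:ℝ) * f i θ + P ‖θ‖) := fun i =>
      mul_le_mul_of_nonneg_left (hhom i θ) (Real.exp_pos _).le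
    have h2 : ∑ i, Real.exp (-(f i θ)) * (fderiv ℝ (f i) θ θ)
        ≤ ∑ i, Real.exp (-(f i θ)) * ((M:ℝ) * f i θ + P ‖θ‖) :=
      Finset.sum_le_sum fun i _ => h1 i
    have h3 : -((1 / (n:ℝ)) * ∑ i, Real.exp (-(f i θ)) * (-(fderiv ℝ (f i) θ θ)))
        = (1 / (n:ℝ)) * ∑ i, Real.exp (-(f i θ)) * (fderiv ℝ (f i) θ θ) := by
      simp [mul_neg, Finset.sum_neg_distrib]
    have h4 : (1 / (n:ℝ)) * ∑ i, Real.exp (-(f i θ)) * ((M:ℝ) * f i θ + P ‖θ‖)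
        = (M:ℝ) * ((1 / (n:ℝ)) * ∑ i, Real.exp (-(f i θ)) * f i θ) + P ‖θ‖ * Lθ := by
      rw [hLθ]
      rw [Finset.sum_congr rfl (fun i _ => by ring :
        ∀ i ∈ Finset.univ, Real.exp (-(f i θ)) * ((M:ℝ) * f i θ + P ‖θ‖)
          = (M:ℝ) * (Real.exp (-(f i θ)) * f i θ) + P ‖θ‖ * Real.exp (-(f i θ)))]
      rw [Finset.sum_add_distrib, ← Finset.mul_sum, ← Finset.mul_sum]
      ring
    rw [h3, ← h4]
    exact mul_le_mul_of_nonneg_left h2 (by positivity)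
  -- step 2: Jensen
  have jensen : (1 / (n:ℝ)) * ∑ i, Real.exp (-(f i θ)) * f i θ ≤ Real.negMulLog Lθ := by
    have hw : ∑ _i : Fin n, (1 / (n:ℝ)) = 1 := by
      simp [Finset.card_univ]
      field_simp
    have := Real.concaveOn_negMulLog.le_map_sum (t := Finset.univ)
      (w := fun _ : Fin n => 1 / (n:ℝ)) (p := fun i => Real.exp (-(f i θ)))
      (fun i _ => by positivity) hw (fun i _ => (Real.exp_pos _).le)
    have heq : ∀ i : Fin n, Real.negMulLog (Real.exp (-(f i θ)))
        = Real.exp (-(f i θ)) * f i θ := by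
      intro i; rw [Real.negMulLog, Real.log_exp]; ring
    calc (1 / (n:ℝ)) * ∑ i, Real.exp (-(f i θ)) * f i θ
        = ∑ i : Fin n, (1 / (n:ℝ)) • Real.negMulLog (Real.exp (-(f i θ))) := by
          rw [Finset.mul_sum]; exact Finset.sum_congr rfl fun i _ => by
            rw [heq i, smul_eq_mul]
      _ ≤ Real.negMulLog (∑ i : Fin n, (1 / (n:ℝ)) • Real.exp (-(f i θ))) := this
      _ = Real.negMulLog Lθ := by rw [hLθ, Finset.mul_sum]; simp [smul_eq_mul]
  have hneg : Real.negMulLog Lθ = Lθ * Real.log (1 / Lθ) := by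
    rw [Real.negMulLog, one_div, Real.log_inv]; ring
  have hM0 : (0:ℝ) ≤ M := by positivity
  calc -((1 / (n:ℝ)) * ∑ i, Real.exp (-(f i θ)) * (-(fderiv ℝ (f i) θ θ)))
      ≤ (M:ℝ) * ((1 / (n:ℝ)) * ∑ i, Real.exp (-(f i θ)) * f i θ) + P ‖θ‖ * Lθ := step1
    _ ≤ (M:ℝ) * (Lθ * Real.log (1 / Lθ)) + P ‖θ‖ * Lθ := by
        rw [← hneg]; exact add_le_add_left (mul_le_mul_of_nonneg_left jensen hM0) _
    _ = (M:ℝ) * Lθ * Real.log (1 / Lθ) + P ‖θ‖ * Lθ := by ring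
end

section
/- Let $f^1 : \mathbb{R} \times \mathbb{R} \to \mathbb{R}$ and $f^2 : \mathbb{R} \times \mathbb{R} \to \mathbb{R}$ be $C^1$ functions that are near-$(M_1, M_2)$- and near-$(M_3, M_4)$-homogeneous respectively, in the sense that there exist polynomials with non-negative coefficients $p_j, r_j, q_j, t_j$ (with $\deg p_j, \deg q_j \leq M_{2j-1}$ and $\deg r_j, \deg t_j \leq M_{2j}$) bounding: $|\partial_\theta f^j(\theta,x)\cdot\theta - M_{2j-1}f^j(\theta,x)| \leq p_j'(|\theta|)r_j(|x|)$, $|\partial_x f^j(\theta,x)\cdot x - M_{2j}f^j(\theta,x)| \leq p_j(|\theta|)r_j'(|x|)$, $|\partial_\theta f^j| \leq q_j'(|\theta|)t_j(|x|)$, $|\partial_x f^j| \leq q_j(|\theta|)t_j'(|x|)$, $|f^j| \leq q_j(|\theta|)t_j(|x|)$. Then the product $s(\theta_1,\theta_2;x) := f^1(\theta_1,x)\cdot f^2(\theta_2,x)$ is near-$(M_1+M_3, M_2+M_4)$-homogeneous: there exist polynomials with non-negative coefficients $P, R$ of degrees at most $M_1+M_3$ and $M_2+M_4$ respectively such that $|\langle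 \nabla_{(\theta_1,\theta_2)} s, (\theta_1,\theta_2)\rangle - (M_1+M_3)s| \leq P'(\|(\theta_1,\theta_2)\|)R(|x|)$. -/
open Finset

/-- Evaluation of the polynomial with coefficients `a 0, …, a N` at `x`. -/
noncomputable def polyEval (N : ℕ) (a : ℕ → ℝ) (x : ℝ) : ℝ :=
  ∑ i ∈ range (N + 1), a i * x ^ i

/-- Evaluation of the derivative of the polynomial with coefficients `a 0, …, a N` at `x`. -/
noncomputable def polyDerivEval (N : ℕ) (a : ℕ → ℝ) (x : ℝ) : ℝ :=
  ∑ i ∈ range (N + 1), (i : ℝ) * a i * x ^ (i - 1)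

lemma polyEval_nonneg (N : ℕ) (a : ℕ → ℝ) (ha : ∀ i, 0 ≤ a i) {y : ℝ} (hy : 0 ≤ y) :
    0 ≤ polyEval N a y :=
  Finset.sum_nonneg fun i _ => mul_nonneg (ha i) (pow_nonneg hy i)

lemma polyDerivEval_nonneg (N : ℕ) (a : ℕ → ℝ) (ha : ∀ i, 0 ≤ a i) {y : ℝ} (hy : 0 ≤ y) :
    0 ≤ polyDerivEval N a y :=
  Finset.sum_nonneg fun i _ => mul_nonneg (mul_nonneg (by positivity) (ha i)) (pow_nonneg hy _)

lemma lemA (N M : ℕ) (a b : ℕ → ℝ) (ha : ∀ i, 0 ≤ a i) (hb : ∀ i, 0 ≤ b i)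
    {u v n : ℝ} (hu : 0 ≤ u) (hv : 0 ≤ v) (hun : u ≤ n) (hvn : v ≤ n) :
    polyDerivEval N a u * polyEval M b v ≤
      ((∑ i ∈ range (N+1), (i:ℝ) * a i) * (∑ j ∈ range (M+1), b j)) * (1+n)^(N+M-1) := by
  have hn : 0 ≤ n := hu.trans hun
  have h1n : (1:ℝ) ≤ 1 + n := by linarith
  rw [polyDerivEval, polyEval, Finset.sum_mul_sum]
  have hrhs : ((∑ i ∈ range (N+1), (i:ℝ) * a i) * (∑ j ∈ range (M+1), b j)) * (1+n)^(N+M-1)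
      = ∑ i ∈ range (N+1), ∑ j ∈ range (M+1), ((i:ℝ) * a i) * (b j * (1+n)^(N+M-1)) := by
    rw [← Finset.sum_mul_sum, ← Finset.sum_mul, mul_assoc]
  rw [hrhs]
  apply Finset.sum_le_sum
  intro i hi
  apply Finset.sum_le_sum
  intro j hj
  simp only [Finset.mem_range] at hi hj
  rcases Nat.eq_zero_or_pos i with h0 | hpos
  · subst h0; simp
  · obtain ⟨m, rfl⟩ := Nat.exists_eq_add_of_le hpos
    have h1 : u ^ (1 + m - 1) ≤ (1+n)^m := by
      simpa using pow_le_pow_left₀ hu (by linarith : u ≤ 1 + n) m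
    have h2 : v ^ j ≤ (1+n)^j := pow_le_pow_left₀ hv (by linarith) j
    have hpow : u ^ (1 + m - 1) * v ^ j ≤ (1+n)^(N+M-1) := by
      calc u ^ (1 + m - 1) * v ^ j ≤ (1+n)^m * (1+n)^j :=
            mul_le_mul h1 h2 (pow_nonneg hv j) (pow_nonneg (by linarith) m)
        _ = (1+n)^(m+j) := by rw [pow_add]
        _ ≤ (1+n)^(N+M-1) := pow_le_pow_right₀ h1n (by omega)
    calc ((1+m : ℕ):ℝ) * a (1+m) * u ^ (1+m-1) * (b j * v ^ j)
        = (((1+m:ℕ):ℝ) * a (1+m) * b j) * (u^(1+m-1) * v^j) := by ring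
      _ ≤ (((1+m:ℕ):ℝ) * a (1+m) * b j) * (1+n)^(N+M-1) := by
          apply mul_le_mul_of_nonneg_left hpow
          exact mul_nonneg (mul_nonneg (Nat.cast_nonneg _) (ha _)) (hb _)
      _ = (((1+m:ℕ):ℝ) * a (1+m)) * (b j * (1+n)^(N+M-1)) := by ring

lemma lemB (N M : ℕ) (a b : ℕ → ℝ) (ha : ∀ i, 0 ≤ a i) (hb : ∀ i, 0 ≤ b i)
    {y : ℝ} (hy : 0 ≤ y) :
    polyEval N a y * polyEval M b y ≤
      ((∑ i ∈ range (N+1), a i) * (∑ j ∈ range (M+1), b j)) * (1+y)^(N+M) := by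
  have h1y : (1:ℝ) ≤ 1 + y := by linarith
  rw [polyEval, polyEval, Finset.sum_mul_sum]
  have hrhs : ((∑ i ∈ range (N+1), a i) * (∑ j ∈ range (M+1), b j)) * (1+y)^(N+M)
      = ∑ i ∈ range (N+1), ∑ j ∈ range (M+1), a i * (b j * (1+y)^(N+M)) := by
    rw [← Finset.sum_mul_sum, ← Finset.sum_mul, mul_assoc]
  rw [hrhs]
  apply Finset.sum_le_sum; intro i hi
  apply Finset.sum_le_sum; intro j hj
  simp only [Finset.mem_range] at hi hj
  have hpow : y ^ i * y ^ j ≤ (1+y)^(N+M) := by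
    calc y ^ i * y ^ j = y ^ (i+j) := by rw [pow_add]
      _ ≤ (1+y)^(i+j) := pow_le_pow_left₀ hy (by linarith) _
      _ ≤ (1+y)^(N+M) := pow_le_pow_right₀ h1y (by omega)
  calc a i * y ^ i * (b j * y ^ j) = (a i * b j) * (y^i * y^j) := by ring
    _ ≤ (a i * b j) * (1+y)^(N+M) := by
        apply mul_le_mul_of_nonneg_left hpow
        exact mul_nonneg (ha _) (hb _)
    _ = a i * (b j * (1+y)^(N+M)) := by ring

lemma lemD (L : ℕ) (E : ℝ) {y : ℝ} :
    polyEval L (fun i => E * (L.choose i : ℝ)) y = E * (1+y)^L := by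
  rw [polyEval, add_comm (1:ℝ) y, add_pow, Finset.mul_sum]
  apply Finset.sum_congr rfl
  intro i _
  simp; ring

lemma lemC (K : ℕ) (C : ℝ) (hC0 : K = 0 → C = 0) (hC : 0 ≤ C) {n : ℝ} (hn : 0 ≤ n) :
    C * (1+n)^(K-1) ≤ polyDerivEval K (fun i => C * (K.choose i : ℝ)) n := by
  rcases Nat.eq_zero_or_pos K with h0 | hpos
  · subst h0
    simp [polyDerivEval, hC0 rfl]
  · obtain ⟨m, rfl⟩ : ∃ m, K = m + 1 := ⟨K - 1, by omega⟩
    rw [polyDerivEval, Finset.sum_range_succ']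
    have hstep : ∀ j ∈ range (m+1), C * (m.choose j : ℝ) * n ^ j ≤
        ((j+1 : ℕ):ℝ) * (C * ((m+1).choose (j+1) : ℝ)) * n ^ (j+1-1) := by
      intro j hj
      simp only [Nat.add_sub_cancel]
      have hid : (m+1) * m.choose j = (m+1).choose (j+1) * (j+1) := Nat.add_one_mul_choose_eq m j
      have hcast : ((j+1:ℕ):ℝ) * (((m+1).choose (j+1) : ℕ):ℝ) = ((m+1:ℕ):ℝ) * ((m.choose j : ℕ):ℝ) := by
        rw [← Nat.cast_mul, ← Nat.cast_mul, mul_comm ((j:ℕ)+1), ← hid]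
      have hterm : 0 ≤ C * (m.choose j : ℝ) * n ^ j :=
        mul_nonneg (mul_nonneg hC (Nat.cast_nonneg _)) (pow_nonneg hn j)
      have h1 : (1:ℝ) ≤ ((m+1:ℕ):ℝ) := by exact_mod_cast Nat.one_le_iff_ne_zero.mpr (by omega)
      calc C * (m.choose j : ℝ) * n ^ j
          ≤ ((m+1:ℕ):ℝ) * (C * (m.choose j : ℝ) * n ^ j) := le_mul_of_one_le_left hterm h1
        _ = ((j+1 : ℕ):ℝ) * (C * ((m+1).choose (j+1) : ℝ)) * n ^ j := by
            push_cast at hcast ⊢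
            linear_combination (-(C * n ^ j)) * hcast
    calc C * (1+n)^(m+1-1)
        = ∑ j ∈ range (m+1), C * (m.choose j : ℝ) * n ^ j := by
          simp only [Nat.add_sub_cancel]
          rw [add_comm (1:ℝ) n, add_pow, Finset.mul_sum]
          apply Finset.sum_congr rfl
          intro i _; simp; ring
      _ ≤ ∑ j ∈ range (m+1), ((j+1 : ℕ):ℝ) * (C * ((m+1).choose (j+1) : ℝ)) * n ^ (j+1-1) :=
          Finset.sum_le_sum hstep
      _ ≤ _ := by simp

set_option maxHeartbeats 1000000 in
/-- scalar multiplication rule: if `f¹` is near-(M₁,M₂)-homogeneous and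
`f²` is near-(M₃,M₄)-homogeneous, then the product `s(θ₁,θ₂;x) = f¹(θ₁,x)·f²(θ₂,x)` is
near-(M₁+M₃, M₂+M₄)-homogeneous in the parameters. -/
theorem stmt19 (M1 M2 M3 M4 : ℕ)
    (f1 f2 : ℝ → ℝ → ℝ)
    (hf1θ : ∀ x, Differentiable ℝ (fun θ => f1 θ x))
    (hf1x : ∀ θ, Differentiable ℝ (fun x => f1 θ x))
    (hf2θ : ∀ x, Differentiable ℝ (fun θ => f2 θ x))
    (hf2x : ∀ θ, Differentiable ℝ (fun x => f2 θ x))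
    (p1 r1 q1 t1 p2 r2 q2 t2 : ℕ → ℝ)
    (hp1 : ∀ i, 0 ≤ p1 i) (hr1 : ∀ i, 0 ≤ r1 i) (hq1 : ∀ i, 0 ≤ q1 i) (ht1 : ∀ i, 0 ≤ t1 i)
    (hp2 : ∀ i, 0 ≤ p2 i) (hr2 : ∀ i, 0 ≤ r2 i) (hq2 : ∀ i, 0 ≤ q2 i) (ht2 : ∀ i, 0 ≤ t2 i)
    (h1a : ∀ θ x, |deriv (fun t => f1 t x) θ * θ - (M1 : ℝ) * f1 θ x| ≤
      polyDerivEval M1 p1 |θ| * polyEval M2 r1 |x|)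
    (h1b : ∀ θ x, |deriv (fun t => f1 θ t) x * x - (M2 : ℝ) * f1 θ x| ≤
      polyEval M1 p1 |θ| * polyDerivEval M2 r1 |x|)
    (h1c : ∀ θ x, |deriv (fun t => f1 t x) θ| ≤ polyDerivEval M1 q1 |θ| * polyEval M2 t1 |x|)
    (h1d : ∀ θ x, |deriv (fun t => f1 θ t) x| ≤ polyEval M1 q1 |θ| * polyDerivEval M2 t1 |x|)
    (h1e : ∀ θ x, |f1 θ x| ≤ polyEval M1 q1 |θ| * polyEval M2 t1 |x|)
    (h2a : ∀ θ x, |deriv (fun t => f2 t x) θ * θ - (M3 : ℝ) * f2 θ x| ≤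
      polyDerivEval M3 p2 |θ| * polyEval M4 r2 |x|)
    (h2b : ∀ θ x, |deriv (fun t => f2 θ t) x * x - (M4 : ℝ) * f2 θ x| ≤
      polyEval M3 p2 |θ| * polyDerivEval M4 r2 |x|)
    (h2c : ∀ θ x, |deriv (fun t => f2 t x) θ| ≤ polyDerivEval M3 q2 |θ| * polyEval M4 t2 |x|)
    (h2d : ∀ θ x, |deriv (fun t => f2 θ t) x| ≤ polyEval M3 q2 |θ| * polyDerivEval M4 t2 |x|)
    (h2e : ∀ θ x, |f2 θ x| ≤ polyEval M3 q2 |θ| * polyEval M4 t2 |x|) :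
    ∃ (P R : ℕ → ℝ), (∀ i, 0 ≤ P i) ∧ (∀ i, 0 ≤ R i) ∧
      ∀ θ1 θ2 x : ℝ,
        |θ1 * deriv (fun t => f1 t x) θ1 * f2 θ2 x +
            θ2 * f1 θ1 x * deriv (fun t => f2 t x) θ2 -
            ((M1 : ℝ) + (M3 : ℝ)) * (f1 θ1 x * f2 θ2 x)| ≤
          polyDerivEval (M1 + M3) P (Real.sqrt (θ1 ^ 2 + θ2 ^ 2)) *
            polyEval (M2 + M4) R |x| := by
  set c1 : ℝ := ∑ i ∈ range (M1+1), (i:ℝ) * p1 i with hc1eq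
  set d1 : ℝ := ∑ i ∈ range (M1+1), q1 i with hd1eq
  set c2 : ℝ := ∑ i ∈ range (M3+1), (i:ℝ) * p2 i with hc2eq
  set d2 : ℝ := ∑ i ∈ range (M3+1), q2 i with hd2eq
  set e1 : ℝ := (∑ i ∈ range (M2+1), r1 i) * (∑ j ∈ range (M4+1), t2 j) with he1eq
  set e2 : ℝ := (∑ i ∈ range (M2+1), t1 i) * (∑ j ∈ range (M4+1), r2 j) with he2eq
  set C : ℝ := c1 * d2 + d1 * c2 with hCeq
  set E : ℝ := e1 + e2 with hEeq
  have hc1n : 0 ≤ c1 := Finset.sum_nonneg fun i _ => mul_nonneg (Nat.cast_nonneg _) (hp1 i)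
  have hd1n : 0 ≤ d1 := Finset.sum_nonneg fun i _ => hq1 i
  have hc2n : 0 ≤ c2 := Finset.sum_nonneg fun i _ => mul_nonneg (Nat.cast_nonneg _) (hp2 i)
  have hd2n : 0 ≤ d2 := Finset.sum_nonneg fun i _ => hq2 i
  have he1n : 0 ≤ e1 := mul_nonneg (Finset.sum_nonneg fun i _ => hr1 i)
    (Finset.sum_nonneg fun i _ => ht2 i)
  have he2n : 0 ≤ e2 := mul_nonneg (Finset.sum_nonneg fun i _ => ht1 i)
    (Finset.sum_nonneg fun i _ => hr2 i)
  have hCn : 0 ≤ C := by positivity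
  have hEn : 0 ≤ E := by positivity
  have hC0 : M1 + M3 = 0 → C = 0 := by
    intro h
    have hM1 : M1 = 0 := by omega
    have hM3 : M3 = 0 := by omega
    subst hM1; subst hM3
    have hz1 : c1 = 0 := by rw [hc1eq]; simp
    have hz2 : c2 = 0 := by rw [hc2eq]; simp
    rw [hCeq, hz1, hz2]; ring
  refine ⟨fun i => C * ((M1+M3).choose i : ℝ), fun i => E * ((M2+M4).choose i : ℝ),
    fun i => mul_nonneg hCn (Nat.cast_nonneg _),
    fun i => mul_nonneg hEn (Nat.cast_nonneg _), ?_⟩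
  intro θ1 θ2 x
  set n := Real.sqrt (θ1 ^ 2 + θ2 ^ 2) with hneq
  have hn0 : 0 ≤ n := Real.sqrt_nonneg _
  have h1n : |θ1| ≤ n := by
    rw [hneq, ← Real.sqrt_sq_eq_abs]
    exact Real.sqrt_le_sqrt (by nlinarith [sq_nonneg θ2])
  have h2n : |θ2| ≤ n := by
    rw [hneq, ← Real.sqrt_sq_eq_abs]
    exact Real.sqrt_le_sqrt (by nlinarith [sq_nonneg θ1])
  have hx0 : (0:ℝ) ≤ |x| := abs_nonneg x
  have habs1 : (0:ℝ) ≤ |θ1| := abs_nonneg _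
  have habs2 : (0:ℝ) ≤ |θ2| := abs_nonneg _
  -- Step 1 : bound by products of the given polynomial bounds
  have step1 : |θ1 * deriv (fun t => f1 t x) θ1 * f2 θ2 x +
      θ2 * f1 θ1 x * deriv (fun t => f2 t x) θ2 -
      ((M1 : ℝ) + (M3 : ℝ)) * (f1 θ1 x * f2 θ2 x)| ≤
      (polyDerivEval M1 p1 |θ1| * polyEval M2 r1 |x|) *
        (polyEval M3 q2 |θ2| * polyEval M4 t2 |x|) +
      (polyEval M1 q1 |θ1| * polyEval M2 t1 |x|) *
        (polyDerivEval M3 p2 |θ2| * polyEval M4 r2 |x|) := by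
    have hrw : θ1 * deriv (fun t => f1 t x) θ1 * f2 θ2 x +
        θ2 * f1 θ1 x * deriv (fun t => f2 t x) θ2 -
        ((M1 : ℝ) + (M3 : ℝ)) * (f1 θ1 x * f2 θ2 x) =
        (deriv (fun t => f1 t x) θ1 * θ1 - (M1 : ℝ) * f1 θ1 x) * f2 θ2 x +
        f1 θ1 x * (deriv (fun t => f2 t x) θ2 * θ2 - (M3 : ℝ) * f2 θ2 x) := by ring
    rw [hrw]
    calc |_ + _| ≤ |(deriv (fun t => f1 t x) θ1 * θ1 - (M1 : ℝ) * f1 θ1 x)| * |f2 θ2 x| +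
          |f1 θ1 x| * |(deriv (fun t => f2 t x) θ2 * θ2 - (M3 : ℝ) * f2 θ2 x)| := by
          refine (abs_add_le _ _).trans ?_
          rw [abs_mul, abs_mul]
      _ ≤ _ := by
          refine add_le_add (mul_le_mul (h1a θ1 x) (h2e θ2 x) (abs_nonneg _) ?_)
            (mul_le_mul (h1e θ1 x) (h2a θ2 x) (abs_nonneg _) ?_)
          · exact mul_nonneg (polyDerivEval_nonneg _ _ hp1 habs1) (polyEval_nonneg _ _ hr1 hx0)
          · exact mul_nonneg (polyEval_nonneg _ _ hq1 habs1) (polyEval_nonneg _ _ ht1 hx0)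
  -- Step 2 : bound each product term
  have t1bound : (polyDerivEval M1 p1 |θ1| * polyEval M2 r1 |x|) *
      (polyEval M3 q2 |θ2| * polyEval M4 t2 |x|) ≤
      ((c1 * d2) * (1+n)^(M1+M3-1)) * (e1 * (1+|x|)^(M2+M4)) := by
    have h1 : polyDerivEval M1 p1 |θ1| * polyEval M3 q2 |θ2| ≤
        (c1 * d2) * (1+n)^(M1+M3-1) := lemA M1 M3 p1 q2 hp1 hq2 habs1 habs2 h1n h2n
    have h2 : polyEval M2 r1 |x| * polyEval M4 t2 |x| ≤ e1 * (1+|x|)^(M2+M4) :=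
      lemB M2 M4 r1 t2 hr1 ht2 hx0
    calc (polyDerivEval M1 p1 |θ1| * polyEval M2 r1 |x|) *
        (polyEval M3 q2 |θ2| * polyEval M4 t2 |x|)
        = (polyDerivEval M1 p1 |θ1| * polyEval M3 q2 |θ2|) *
          (polyEval M2 r1 |x| * polyEval M4 t2 |x|) := by ring
      _ ≤ _ := mul_le_mul h1 h2
          (mul_nonneg (polyEval_nonneg _ _ hr1 hx0) (polyEval_nonneg _ _ ht2 hx0))
          (by positivity)
  have t2bound : (polyEval M1 q1 |θ1| * polyEval M2 t1 |x|) *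
      (polyDerivEval M3 p2 |θ2| * polyEval M4 r2 |x|) ≤
      ((c2 * d1) * (1+n)^(M1+M3-1)) * (e2 * (1+|x|)^(M2+M4)) := by
    have h1 : polyDerivEval M3 p2 |θ2| * polyEval M1 q1 |θ1| ≤
        (c2 * d1) * (1+n)^(M3+M1-1) := lemA M3 M1 p2 q1 hp2 hq1 habs2 habs1 h2n h1n
    rw [show M3 + M1 - 1 = M1 + M3 - 1 by omega] at h1
    have h2 : polyEval M2 t1 |x| * polyEval M4 r2 |x| ≤ e2 * (1+|x|)^(M2+M4) :=
      lemB M2 M4 t1 r2 ht1 hr2 hx0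
    calc (polyEval M1 q1 |θ1| * polyEval M2 t1 |x|) *
        (polyDerivEval M3 p2 |θ2| * polyEval M4 r2 |x|)
        = (polyDerivEval M3 p2 |θ2| * polyEval M1 q1 |θ1|) *
          (polyEval M2 t1 |x| * polyEval M4 r2 |x|) := by ring
      _ ≤ _ := mul_le_mul h1 h2
          (mul_nonneg (polyEval_nonneg _ _ ht1 hx0) (polyEval_nonneg _ _ hr2 hx0))
          (by positivity)
  -- Step 3 : combine
  have step3 : ((c1 * d2) * (1+n)^(M1+M3-1)) * (e1 * (1+|x|)^(M2+M4)) +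
      ((c2 * d1) * (1+n)^(M1+M3-1)) * (e2 * (1+|x|)^(M2+M4)) ≤
      (C * (1+n)^(M1+M3-1)) * (E * (1+|x|)^(M2+M4)) := by
    have hpp : (0:ℝ) ≤ (1+n)^(M1+M3-1) * (1+|x|)^(M2+M4) := by positivity
    have hsum : (0:ℝ) ≤ c1 * d2 * e2 + d1 * c2 * e1 := by positivity
    have key : (C * (1+n)^(M1+M3-1)) * (E * (1+|x|)^(M2+M4)) -
        (((c1 * d2) * (1+n)^(M1+M3-1)) * (e1 * (1+|x|)^(M2+M4)) +
         ((c2 * d1) * (1+n)^(M1+M3-1)) * (e2 * (1+|x|)^(M2+M4))) =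
        ((1+n)^(M1+M3-1) * (1+|x|)^(M2+M4)) * (c1 * d2 * e2 + d1 * c2 * e1) := by
      rw [hCeq, hEeq]; ring
    linarith [key, mul_nonneg hpp hsum]
  -- Step 4 : compare with the chosen polynomials
  have step4 : (C * (1+n)^(M1+M3-1)) * (E * (1+|x|)^(M2+M4)) ≤
      polyDerivEval (M1 + M3) (fun i => C * ((M1+M3).choose i : ℝ)) n *
        polyEval (M2 + M4) (fun i => E * ((M2+M4).choose i : ℝ)) |x| := by
    rw [lemD]
    exact mul_le_mul_of_nonneg_right (lemC (M1+M3) C hC0 hCn hn0) (by positivity)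
  calc |θ1 * deriv (fun t => f1 t x) θ1 * f2 θ2 x +
      θ2 * f1 θ1 x * deriv (fun t => f2 t x) θ2 -
      ((M1 : ℝ) + (M3 : ℝ)) * (f1 θ1 x * f2 θ2 x)| ≤ _ := step1
    _ ≤ ((c1 * d2) * (1+n)^(M1+M3-1)) * (e1 * (1+|x|)^(M2+M4)) +
        ((c2 * d1) * (1+n)^(M1+M3-1)) * (e2 * (1+|x|)^(M2+M4)) := add_le_add t1bound t2bound
    _ ≤ _ := step3
    _ ≤ _ := step4
end
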